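/- Let X : ℝ³ → ℝ³ be a smooth vector field which is conformal Killing for the Euclidean metric, i.e. (𝒟X)_{ab}(x) = 0 for all x ∈ ℝ³ and all a, b ∈ {1,2,3}, and suppose X decays at infinity, i.e. ‖X(x)‖ → 0 as ‖x‖ → ∞. Then X = 0 identically. (Equivalently: no non-trivial conformal Killing vector field on Euclidean ℝ³ decays at infinity, since the space of such fields is spanned by the translations e_i, the rotations x^i e_j − x^j e_i, the dilation Σ_i x^i e_i, and the special conformal fields 2x^j(Σ_i x^i e_i) − ‖x‖² e_j, none of which decay at infinity.) -/

import Mathlib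

open Metric Set

noncomputable section

/-- Euclidean 3-space. -/
abbrev E3 : Type := EuclideanSpace ℝ (Fin 3)

/-- Partial derivative `∂_a g` in the direction of the `a`-th coordinate vector. -/
def pd (a : Fin 3) (g : E3 → ℝ) : E3 → ℝ :=
  fun x => fderiv ℝ g x (EuclideanSpace.single a 1)

/-- The Euclidean conformal Killing operator
`(𝒟X)_{ab} = ½(∂_a X_b + ∂_b X_a) − (1/3)δ_{ab} Σ_c ∂_c X_c`. -/
def cko (X : E3 → E3) (a b : Fin 3) : E3 → ℝ := fun x =>
  (pd a (fun y => X y b) x + pd b (fun y => X y a) x) / 2 -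
    (if a = b then (1 : ℝ) else 0) / 3 * ∑ c : Fin 3, pd c (fun y => X y c) x

/-- The Euclidean vector Laplacian `(L X)_a = −Σ_b ∂_b (𝒟X)_{ab}`. -/
def vecLap (X : E3 → E3) : E3 → E3 := fun x =>
  (EuclideanSpace.equiv (Fin 3) ℝ).symm fun a => -∑ b : Fin 3, pd b (cko X a b) x

/-!
Writing `∂_a X_b + ∂_b X_a = f δ_ab` with `f = (2/3) div X`, the usual permutation of indices
expresses the second derivatives of `X` through the gradient of `f`. Comparing mixed third
derivatives then forces the Hessian of `f` to vanish (this needs a third coordinate direction), so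
all third derivatives of `X` vanish. Along every line `X` is therefore a quadratic polynomial, and a
polynomial tending to `0` at infinity is zero.
-/

open scoped ContDiff
open Filter Topology

section Calculus

variable {g h : E3 → ℝ} {x : E3}

theorem pd_add (hg : DifferentiableAt ℝ g x) (hh : DifferentiableAt ℝ h x) (a : Fin 3) :
    pd a (fun y => g y + h y) x = pd a g x + pd a h x := by
  simp only [pd, fderiv_fun_add hg hh]
  rfl

theorem pd_const (c : ℝ) (a : Fin 3) : pd a (fun _ => c) = fun _ => 0 := by
  ext
  simp [pd]

theorem ContDiff.pd (hg : ContDiff ℝ ∞ g) (a : Fin 3) : ContDiff ℝ ∞ (pd a g) :=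
  (hg.fderiv_right (m := ∞) le_rfl).clm_apply contDiff_const

theorem pd_pd_eq_fderiv_fderiv (hg : ContDiff ℝ 2 g) (i j : Fin 3) :
    pd i (pd j g) x =
      fderiv ℝ (fderiv ℝ g) x (EuclideanSpace.single i 1) (EuclideanSpace.single j 1) := by
  have hdg : DifferentiableAt ℝ (fderiv ℝ g) x :=
    ((hg.fderiv_right (m := 1) le_rfl).differentiable one_ne_zero).differentiableAt
  change fderiv ℝ (fun y => fderiv ℝ g y (EuclideanSpace.single j 1)) x _ = _
  simp [fderiv_clm_apply hdg (differentiableAt_const _)]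

theorem pd_comm (hg : ContDiff ℝ 2 g) (i j : Fin 3) : pd i (pd j g) x = pd j (pd i g) x := by
  rw [pd_pd_eq_fderiv_fderiv hg, pd_pd_eq_fderiv_fderiv hg]
  exact hg.contDiffAt.isSymmSndFDerivAt (by simp) _ _

theorem hasDerivAt_comp_add_smul_single {a : Fin 3} {t : ℝ}
    (hg : DifferentiableAt ℝ g (x + t • EuclideanSpace.single a 1)) :
    HasDerivAt (fun s : ℝ => g (x + s • EuclideanSpace.single a 1))
      (pd a g (x + t • EuclideanSpace.single a 1)) t := by
  have hline := ((hasDerivAt_id' t).smul_const (EuclideanSpace.single a (1 : ℝ))).const_add x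
  rw [one_smul] at hline
  exact hg.hasFDerivAt.comp_hasDerivAt t hline

theorem is_const_of_pd_eq_zero (hg : Differentiable ℝ g) (h : ∀ a y, pd a g y = 0) (x y : E3) :
    g x = g y := by
  refine is_const_of_fderiv_eq_zero hg (fun z => ?_) x y
  refine ContinuousLinearMap.coe_injective
    ((EuclideanSpace.basisFun (Fin 3) ℝ).toBasis.ext fun a => ?_)
  simpa [EuclideanSpace.basisFun_apply, pd] using h a z

end Calculus

open Polynomial in
theorem eq_zero_of_hasDerivAt_const_of_tendsto {φ φ' : ℝ → ℝ} {c : ℝ}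
    (hφ : ∀ t, HasDerivAt φ (φ' t) t) (hφ' : ∀ t, HasDerivAt φ' c t)
    (hlim : Tendsto φ atTop (𝓝 0)) (t : ℝ) : φ t = 0 := by
  have hφ'_affine : ∀ s, φ' s = φ' 0 + c * s := by
    have hderiv : ∀ s, HasDerivAt (fun s => φ' s - c * s) 0 s := fun s => by
      simpa using (hφ' s).fun_sub ((hasDerivAt_id' s).const_mul c)
    intro s
    have := is_const_of_deriv_eq_zero (fun s => (hderiv s).differentiableAt)
      (fun s => (hderiv s).deriv) s 0
    simp only [mul_zero, sub_zero] at this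
    linarith
  set P : ℝ[X] := C (c / 2) * X ^ 2 + C (φ' 0) * X + C (φ 0) with hP
  have hφ_eq : ∀ s, φ s = P.eval s := by
    have hderiv : ∀ s, HasDerivAt (fun s => φ s - P.eval s) 0 s := fun s => by
      have hP' : P.derivative.eval s = φ' s := by
        simp only [hP, derivative_add, derivative_C_mul_X_pow, derivative_C_mul_X, derivative_C,
          eval_add, eval_mul, eval_C, eval_pow, eval_X, eval_zero, hφ'_affine s]
        push_cast
        ring
      simpa [hP'] using (hφ s).fun_sub (P.hasDerivAt s)
    have hP_eval_zero : P.eval 0 = φ 0 := by simp [hP]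
    intro s
    have := is_const_of_deriv_eq_zero (fun s => (hderiv s).differentiableAt)
      (fun s => (hderiv s).deriv) s 0
    linarith
  have hP0 : P = 0 := by
    rw [← leadingCoeff_eq_zero]
    exact ((tendsto_nhds_iff P).1 (hlim.congr hφ_eq)).1
  rw [hφ_eq, hP0, eval_zero]

theorem tendsto_comp_add_smul_of_decay {E F : Type*} [NormedAddCommGroup E] [NormedSpace ℝ E]
    [NormedAddCommGroup F] {f : E → F}
    (hf : ∀ ε : ℝ, 0 < ε → ∃ R : ℝ, ∀ x : E, R < ‖x‖ → ‖f x‖ < ε) (x : E) {v : E} (hv : v ≠ 0) :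
    Tendsto (fun t : ℝ => f (x + t • v)) atTop (𝓝 0) := by
  have hnorm : Tendsto (fun t : ℝ => ‖x + t • v‖) atTop atTop := by
    have hlower : Tendsto (fun t : ℝ => t * ‖v‖ - ‖x‖) atTop atTop :=
      tendsto_atTop_add_const_right _ _ (tendsto_id.atTop_mul_const (norm_pos_iff.2 hv))
    refine tendsto_atTop_mono' _ ?_ hlower
    filter_upwards [eventually_ge_atTop 0] with t ht
    have := norm_sub_le (x + t • v) x
    rw [add_sub_cancel_left, norm_smul, Real.norm_of_nonneg ht] at this
    linarith
  refine Metric.tendsto_nhds.2 fun ε hε => ?_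
  obtain ⟨R, hR⟩ := hf ε hε
  filter_upwards [hnorm.eventually_gt_atTop R] with t ht
  simpa using hR _ ht

theorem two_mul_eq_of_add_swap_eq {ι R : Type*} [DecidableEq ι] [CommRing R]
    {T : ι → ι → ι → R} {g : ι → R} (hT : ∀ c a b, T c a b = T a c b)
    (h : ∀ c a b, T c a b + T c b a = if a = b then g c else 0) (c a b : ι) :
    2 * T c a b =
      (if a = b then g c else 0) + (if b = c then g a else 0) - (if c = a then g b else 0) := by
  linear_combination h c a b + h a b c - h b c a - hT a c b + hT b c a - hT a b c

/-- Taking `b = c` distinct from `a` and `d` gives `H d a = -δ_da H c c`: this is where a third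
coordinate direction is needed. -/
theorem eq_zero_of_symm_of_swap_eq (H : Fin 3 → Fin 3 → ℝ) (hH : ∀ i j, H i j = H j i)
    (h : ∀ a b c d : Fin 3,
      (if a = b then H d c else 0) + (if b = c then H d a else 0) - (if c = a then H d b else 0) =
      (if a = b then H c d else 0) + (if b = d then H c a else 0) - (if d = a then H c b else 0))
    (i j : Fin 3) : H i j = 0 := by
  have h01 := h 1 2 2 0
  have h02 := h 2 1 1 0
  have h12 := h 2 0 0 1
  have h00 := h 0 1 1 0
  have h00' := h 0 2 2 0
  have h11 := h 1 2 2 1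
  have h10 := hH 1 0
  have h20 := hH 2 0
  have h21 := hH 2 1
  simp only [Fin.reduceEq, ↓reduceIte, zero_add, add_zero, sub_zero, zero_sub, sub_self]
    at h01 h02 h12 h00 h00' h11
  fin_cases i <;> fin_cases j <;>
    simp only [Fin.zero_eta, Fin.mk_one, Fin.reduceFinMk, Fin.isValue] <;> linarith

def IsConformalKilling (X : E3 → E3) : Prop := ∀ x : E3, ∀ a b : Fin 3, cko X a b x = 0

def conformalFactor (X : E3 → E3) : E3 → ℝ := fun y => 2 / 3 * ∑ c : Fin 3, pd c (X · c) y

section ConformalKilling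

variable {X : E3 → E3}

theorem ContDiff.component (hX : ContDiff ℝ ∞ X) (b : Fin 3) : ContDiff ℝ ∞ (X · b) :=
  (EuclideanSpace.proj (𝕜 := ℝ) b).contDiff.comp hX

theorem ContDiff.conformalFactor (hX : ContDiff ℝ ∞ X) : ContDiff ℝ ∞ (conformalFactor X) :=
  contDiff_const.mul (ContDiff.sum fun c _ => (hX.component c).pd c)

namespace IsConformalKilling

theorem pd_add_pd (hck : IsConformalKilling X) (a b : Fin 3) (x : E3) :
    pd a (X · b) x + pd b (X · a) x = if a = b then conformalFactor X x else 0 := by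
  have h := hck x a b
  unfold cko at h
  split_ifs with hab
  · subst hab
    simp only [if_true, conformalFactor] at h ⊢
    linarith
  · simp only [hab, if_false] at h
    linarith

theorem pd_pd_pd_add_pd_pd_pd (hck : IsConformalKilling X) (hX : ContDiff ℝ ∞ X)
    (a b c d : Fin 3) (x : E3) :
    pd d (pd c (pd a (X · b))) x + pd d (pd c (pd b (X · a))) x =
      if a = b then pd d (pd c (conformalFactor X)) x else 0 := by
  have hsmooth (i j : Fin 3) : ContDiff ℝ ∞ (pd c (pd i (X · j))) :=
    ((hX.component j).pd i).pd c
  have hsum : (fun y => pd c (pd a (X · b)) y + pd c (pd b (X · a)) y) =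
      pd c (if a = b then conformalFactor X else fun _ => 0) := by
    funext y
    rw [← pd_add (((hX.component b).pd a).differentiable (by simp) y)
      (((hX.component a).pd b).differentiable (by simp) y)]
    congr 1
    funext z
    rw [hck.pd_add_pd a b]
    split_ifs <;> rfl
  rw [← pd_add ((hsmooth a b).differentiable (by simp) x)
    ((hsmooth b a).differentiable (by simp) x), hsum]
  split_ifs
  · rfl
  · simp only [pd_const]

theorem two_mul_pd_pd_pd (hck : IsConformalKilling X) (hX : ContDiff ℝ ∞ X)
    (a b c d : Fin 3) (x : E3) :
    2 * pd d (pd c (pd a (X · b))) x =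
      (if a = b then pd d (pd c (conformalFactor X)) x else 0) +
        (if b = c then pd d (pd a (conformalFactor X)) x else 0) -
        (if c = a then pd d (pd b (conformalFactor X)) x else 0) := by
  refine two_mul_eq_of_add_swap_eq (T := fun c a b => pd d (pd c (pd a (X · b))) x)
    (fun c a b => ?_) (fun c a b => hck.pd_pd_pd_add_pd_pd_pd hX a b c d x) c a b
  simp only
  congr 1
  exact funext fun y => pd_comm ((hX.component b).of_le (by decide)) c a

theorem pd_pd_conformalFactor_eq_zero (hck : IsConformalKilling X) (hX : ContDiff ℝ ∞ X)
    (i j : Fin 3) (x : E3) : pd i (pd j (conformalFactor X)) x = 0 := by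
  have hf : ContDiff ℝ 2 (conformalFactor X) := hX.conformalFactor.of_le (by decide)
  refine eq_zero_of_symm_of_swap_eq (fun i j => pd i (pd j (conformalFactor X)) x)
    (fun i j => pd_comm hf i j) (fun a b c d => ?_) i j
  rw [← hck.two_mul_pd_pd_pd hX, ← hck.two_mul_pd_pd_pd hX,
    pd_comm (((hX.component b).pd a).of_le (by decide))]

theorem pd_pd_pd_eq_zero (hck : IsConformalKilling X) (hX : ContDiff ℝ ∞ X) (a b c d : Fin 3)
    (x : E3) : pd d (pd c (pd a (X · b))) x = 0 := by
  have h := hck.two_mul_pd_pd_pd hX a b c d x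
  simp only [hck.pd_pd_conformalFactor_eq_zero hX, ite_self, add_zero, sub_zero] at h
  linarith

theorem pd_pd_eq (hck : IsConformalKilling X) (hX : ContDiff ℝ ∞ X) (a b c : Fin 3)
    (x y : E3) : pd c (pd a (X · b)) x = pd c (pd a (X · b)) y :=
  is_const_of_pd_eq_zero ((((hX.component b).pd a).pd c).differentiable (by simp))
    (fun d z => hck.pd_pd_pd_eq_zero hX a b c d z) x y

end IsConformalKilling

end ConformalKilling

/-- a conformal Killing vector field on Euclidean `ℝ³` which decays
at infinity vanishes identically. -/
theorem conformal_killing_decay_eq_zero (X : E3 → E3) (hX : ContDiff ℝ (⊤ : ℕ∞) X)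
    (hck : ∀ x : E3, ∀ a b : Fin 3, cko X a b x = 0)
    (hdecay : ∀ ε : ℝ, 0 < ε → ∃ R : ℝ, ∀ x : E3, R < ‖x‖ → ‖X x‖ < ε) :
    ∀ x : E3, X x = 0 := by
  intro x
  ext b
  set e : E3 := EuclideanSpace.single 0 1
  have hφ (t : ℝ) : HasDerivAt (fun t => X (x + t • e) b) (pd 0 (X · b) (x + t • e)) t :=
    hasDerivAt_comp_add_smul_single ((hX.component b).differentiable (by simp) _)
  have hφ' (t : ℝ) :
      HasDerivAt (fun t => pd 0 (X · b) (x + t • e)) (pd 0 (pd 0 (X · b)) 0) t := by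
    rw [IsConformalKilling.pd_pd_eq hck hX 0 b 0 0 (x + t • e)]
    exact hasDerivAt_comp_add_smul_single (((hX.component b).pd 0).differentiable (by simp) _)
  have hdecay_b : ∀ ε : ℝ, 0 < ε → ∃ R : ℝ, ∀ y : E3, R < ‖y‖ → ‖X y b‖ < ε := fun ε hε =>
    (hdecay ε hε).imp fun R hR y hy => (PiLp.norm_apply_le _ b).trans_lt (hR y hy)
  have he : e ≠ 0 := by simp [e]
  simpa using eq_zero_of_hasDerivAt_const_of_tendsto hφ hφ'
    (tendsto_comp_add_smul_of_decay hdecay_b x he) 0
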